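/- arXiv:0704.0026 — 2 statements merged into one kernel-verified Lean document; each statement's English description precedes it below -/
import Mathlib

section
/- In the Cayley-Dickson 2^N-ions with N ≥ 2 and generator G = 2^(N-1), for any index u with 0 < u < G, the product i_u · i_G equals +i_{u+G} and i_G · i_u equals −i_{u+G}; moreover u XOR G = u + G. -/
noncomputable section

/-- Cayley-Dickson algebra of dimension `2^n` over `ℝ`, as iterated pairs. -/
@[reducible] def CD : ℕ → Type
  | 0 => ℝ
  | n+1 => CD n × CD n

def CDzero : (n : ℕ) → CD n
  | 0 => (0 : ℝ)
  | n+1 => (CDzero n, CDzero n)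

def CDadd : (n : ℕ) → CD n → CD n → CD n
  | 0, x, y => ((x + y : ℝ) : CD 0)
  | n+1, x, y => ((CDadd n (x : CD (n+1)).1 (y : CD (n+1)).1,
      CDadd n (x : CD (n+1)).2 (y : CD (n+1)).2) : CD (n+1))

def CDneg : (n : ℕ) → CD n → CD n
  | 0, x => ((-(x : ℝ) : ℝ) : CD 0)
  | n+1, x => (((CDneg n (x : CD (n+1)).1, CDneg n (x : CD (n+1)).2)) : CD (n+1))

def CDconj : (n : ℕ) → CD n → CD n
  | 0, x => x
  | n+1, x => (((CDconj n (x : CD (n+1)).1, CDneg n (x : CD (n+1)).2)) : CD (n+1))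

/-- Cayley-Dickson multiplication: `(a,b)(c,d) = (ac - d* b, d a + b c*)`. -/
def CDmul : (n : ℕ) → CD n → CD n → CD n
  | 0, x, y => ((x * y : ℝ) : CD 0)
  | n+1, x, y =>
      (((CDadd n (CDmul n (x : CD (n+1)).1 (y : CD (n+1)).1)
          (CDneg n (CDmul n (CDconj n (y : CD (n+1)).2) (x : CD (n+1)).2)),
        CDadd n (CDmul n (y : CD (n+1)).2 (x : CD (n+1)).1)
          (CDmul n (x : CD (n+1)).2 (CDconj n (y : CD (n+1)).1)))) : CD (n+1))

def CDsub (n : ℕ) (x y : CD n) : CD n := CDadd n x (CDneg n y)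

def CDsmul : (n : ℕ) → ℝ → CD n → CD n
  | 0, c, x => ((c * x : ℝ) : CD 0)
  | n+1, c, x => (((CDsmul n c (x : CD (n+1)).1, CDsmul n c (x : CD (n+1)).2)) : CD (n+1))

/-- The imaginary/basis unit `i_k` of the `2^n`-ions (`k < 2^n`); `i_0 = 1`. -/
def CDunit : (n : ℕ) → ℕ → CD n
  | 0, _ => ((1 : ℝ) : CD 0)
  | n+1, k =>
      if k < 2^n then (((CDunit n k, CDzero n)) : CD (n+1))
      else (((CDzero n, CDunit n (k - 2^n))) : CD (n+1))

/-- `(a,b,c)` is an associative triplet in cyclic positive order among the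
indices of the `2^n`-ions. -/
def IsCPO (n : ℕ) (a b c : ℕ) : Prop :=
  CDmul n (CDunit n a) (CDunit n b) = CDunit n c ∧
  CDmul n (CDunit n b) (CDunit n c) = CDunit n a ∧
  CDmul n (CDunit n c) (CDunit n a) = CDunit n b

/-
Write `G = 2^n` for the generator of the `2^(n+1)`-ions, viewed as pairs of `2^n`-ions.
Then `i_u = (i_u, 0)` for `u < G`, `i_G = (0, 1)` and `i_{u+G} = (0, i_u)`, so the doubling
formula `(a, b)(c, d) = (ac - d̄b, da + bc̄)` gives `i_u i_G = (0, i_u)` and `i_G i_u = (0, ī_u)`.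
The sign comes from imaginary units being anti-self-conjugate: `ī_u = -i_u` for `u > 0`.
The index identity holds because `u < G` shares no bit with `G`.
-/

section Pair

variable (n : ℕ) (a b c d : CD n)

lemma CDzero_succ : CDzero (n+1) = ((CDzero n, CDzero n) : CD (n+1)) := rfl

@[simp] lemma CDneg_pair :
    CDneg (n+1) ((a, b) : CD (n+1)) = ((CDneg n a, CDneg n b) : CD (n+1)) := rfl

@[simp] lemma CDconj_pair :
    CDconj (n+1) ((a, b) : CD (n+1)) = ((CDconj n a, CDneg n b) : CD (n+1)) := rfl

@[simp] lemma CDadd_pair :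
    CDadd (n+1) ((a, b) : CD (n+1)) ((c, d) : CD (n+1)) =
      ((CDadd n a c, CDadd n b d) : CD (n+1)) := rfl

@[simp] lemma CDmul_pair :
    CDmul (n+1) ((a, b) : CD (n+1)) ((c, d) : CD (n+1)) =
      ((CDadd n (CDmul n a c) (CDneg n (CDmul n (CDconj n d) b)),
        CDadd n (CDmul n d a) (CDmul n b (CDconj n c))) : CD (n+1)) := rfl

end Pair

@[simp] lemma CDadd_zero : ∀ n (x : CD n), CDadd n x (CDzero n) = x
  | 0, x => add_zero (x : ℝ)
  | n+1, (a, b) => by simp [CDzero_succ, CDadd_zero n]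

@[simp] lemma CDzero_add : ∀ n (x : CD n), CDadd n (CDzero n) x = x
  | 0, x => zero_add (x : ℝ)
  | n+1, (a, b) => by simp [CDzero_succ, CDzero_add n]

@[simp] lemma CDneg_zero : ∀ n, CDneg n (CDzero n) = CDzero n
  | 0 => neg_zero
  | n+1 => by simp [CDzero_succ, CDneg_zero n]

@[simp] lemma CDconj_zero : ∀ n, CDconj n (CDzero n) = CDzero n
  | 0 => rfl
  | n+1 => by simp [CDzero_succ, CDconj_zero n]

lemma CDmul_zero_and_zero_mul : ∀ n (x : CD n),
    CDmul n x (CDzero n) = CDzero n ∧ CDmul n (CDzero n) x = CDzero n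
  | 0, x => ⟨mul_zero (x : ℝ), zero_mul (x : ℝ)⟩
  | n+1, (a, b) => by
      have ih := fun y => CDmul_zero_and_zero_mul n y
      simp [CDzero_succ, (ih _).1, (ih _).2]

@[simp] lemma CDmul_zero (n : ℕ) (x : CD n) : CDmul n x (CDzero n) = CDzero n :=
  (CDmul_zero_and_zero_mul n x).1

@[simp] lemma CDzero_mul (n : ℕ) (x : CD n) : CDmul n (CDzero n) x = CDzero n :=
  (CDmul_zero_and_zero_mul n x).2

lemma CDunit_of_lt {n k : ℕ} (h : k < 2 ^ n) :
    CDunit (n+1) k = ((CDunit n k, CDzero n) : CD (n+1)) := by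
  simp [CDunit, h]

lemma CDunit_add_two_pow (n k : ℕ) :
    CDunit (n+1) (k + 2 ^ n) = ((CDzero n, CDunit n k) : CD (n+1)) := by
  simp [CDunit]

lemma CDunit_two_pow (n : ℕ) :
    CDunit (n+1) (2 ^ n) = ((CDzero n, CDunit n 0) : CD (n+1)) := by
  simpa using CDunit_add_two_pow n 0

@[simp] lemma CDconj_one : ∀ n, CDconj n (CDunit n 0) = CDunit n 0
  | 0 => rfl
  | n+1 => by simp [CDunit_of_lt (Nat.two_pow_pos n), CDconj_one n]

@[simp] lemma CDmul_one : ∀ n (x : CD n), CDmul n x (CDunit n 0) = x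
  | 0, x => mul_one (x : ℝ)
  | n+1, (a, b) => by simp [CDunit_of_lt (Nat.two_pow_pos n), CDmul_one n]

@[simp] lemma CDone_mul : ∀ n (x : CD n), CDmul n (CDunit n 0) x = x
  | 0, x => one_mul (x : ℝ)
  | n+1, (a, b) => by simp [CDunit_of_lt (Nat.two_pow_pos n), CDone_mul n]

lemma CDconj_unit_of_pos : ∀ {n u : ℕ}, 0 < u → u < 2 ^ n →
    CDconj n (CDunit n u) = CDneg n (CDunit n u)
  | 0, _, hu0, hu => by omega
  | n+1, u, hu0, hu => by
      by_cases h : u < 2 ^ n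
      · simp [CDunit_of_lt h, CDconj_unit_of_pos hu0 h]
      · obtain ⟨k, rfl⟩ : ∃ k, u = k + 2 ^ n := ⟨u - 2 ^ n, by omega⟩
        simp [CDunit_add_two_pow]

lemma CDmul_unit_two_pow {n u : ℕ} (hu : u < 2 ^ n) :
    CDmul (n+1) (CDunit (n+1) u) (CDunit (n+1) (2 ^ n)) = CDunit (n+1) (u + 2 ^ n) := by
  simp [CDunit_of_lt hu, CDunit_two_pow, CDunit_add_two_pow]

lemma CDmul_two_pow_unit {n u : ℕ} (hu0 : 0 < u) (hu : u < 2 ^ n) :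
    CDmul (n+1) (CDunit (n+1) (2 ^ n)) (CDunit (n+1) u) =
      CDneg (n+1) (CDunit (n+1) (u + 2 ^ n)) := by
  simp [CDunit_of_lt hu, CDunit_two_pow, CDunit_add_two_pow, CDconj_unit_of_pos hu0 hu]

lemma Nat.xor_two_pow_of_lt {k u : ℕ} (h : u < 2 ^ k) : u ^^^ 2 ^ k = u + 2 ^ k := by
  have hmod : (u ^^^ 2 ^ k) % 2 ^ k = u := by
    rw [Nat.xor_mod_two_pow, Nat.mod_eq_of_lt h, Nat.mod_self, Nat.xor_zero]
  have hdiv : (u ^^^ 2 ^ k) / 2 ^ k = 1 := by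
    rw [Nat.xor_div_two_pow, Nat.div_eq_of_lt h, Nat.div_self (Nat.two_pow_pos k),
      Nat.zero_xor]
  rw [← Nat.mod_add_div (u ^^^ 2 ^ k) (2 ^ k), hmod, hdiv, mul_one]

theorem rule_one_general (N u : ℕ) (hu0 : 0 < u) (hu : u < 2 ^ (N - 1)) :
    CDmul N (CDunit N u) (CDunit N (2 ^ (N - 1))) =
      CDunit N (u + 2 ^ (N - 1)) ∧
    CDmul N (CDunit N (2 ^ (N - 1))) (CDunit N u) =
      CDneg N (CDunit N (u + 2 ^ (N - 1))) ∧
    u ^^^ 2 ^ (N - 1) = u + 2 ^ (N - 1) := by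
  cases N with
  | zero => rw [zero_tsub, pow_zero] at hu; omega
  | succ n =>
    rw [Nat.add_sub_cancel] at hu ⊢
    exact ⟨CDmul_unit_two_pow hu, CDmul_two_pow_unit hu0 hu, Nat.xor_two_pow_of_lt hu⟩

/-- Rule 1: in the `2^N`-ions (`N ≥ 2`) with generator `G = 2^(N-1)`, for any
index `0 < u < G` we have `i_u · i_G = +i_{u+G}`, `i_G · i_u = -i_{u+G}`, and
`u XOR G = u + G`. -/
theorem rule_one (N u : ℕ) (hN : 2 ≤ N) (hu0 : 0 < u) (hu : u < 2 ^ (N - 1)) :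
    CDmul N (CDunit N u) (CDunit N (2 ^ (N - 1))) =
      CDunit N (u + 2 ^ (N - 1)) ∧
    CDmul N (CDunit N (2 ^ (N - 1))) (CDunit N u) =
      CDneg N (CDunit N (u + 2 ^ (N - 1))) ∧
    u ^^^ 2 ^ (N - 1) = u + 2 ^ (N - 1) :=
  rule_one_general N u hu0 hu

end
end

section
/- For the 32-dimensional Pathions with strut constant S = 8 + s (0 < s < 8), the product (i_{a} + i_{16 + 8 + f})(i_{b} + i_{16 + 8 + e}) is nonzero whenever (a, b, c) is the zigzag L-trip of the Sedenion box-kite with strut constant s and e = b XOR s, f = a XOR s; only the ±i_c terms cancel. -/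
/-!
The Cayley–Dickson basis units form a twisted group algebra of `(ℤ/2)^n`:
`i_p i_q = σ(p, q) i_(p xor q)` with a sign `σ(p, q) = ±1` determined recursively by the
doubling formula. Consequently, in the `2^(n+1)`-ions the product of the assessor sums
`i_p + i_(G + (p xor S))` and `i_q + i_(G + (q xor S))` (`G = 2^n`) has only two nonzero
coordinates, at `i_(p xor q)` and at `i_(G + (p xor q xor S))`, each a sum of two signs.
The zigzag hypotheses fix two sedenion signs, and a finite check of the sedenion sign table
shows that the two coordinates never vanish together.
-/

noncomputable section

namespace Nat

variable {n p q : ℕ}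

theorem two_pow_add_eq_xor (hp : p < 2 ^ n) : 2 ^ n + p = 2 ^ n ^^^ p := by
  apply Nat.eq_of_testBit_eq
  intro i
  rw [Nat.testBit_xor, Nat.testBit_two_pow]
  rcases lt_trichotomy i n with h | rfl | h
  · simp [Nat.testBit_two_pow_add_gt h, h.ne']
  · simp [Nat.testBit_two_pow_add_eq, Nat.testBit_lt_two_pow hp]
  · have hlt : 2 ^ n + p < 2 ^ i :=
      lt_of_lt_of_le (by omega) (Nat.pow_le_pow_right two_pos h : 2 ^ (n + 1) ≤ 2 ^ i)
    simp [Nat.testBit_lt_two_pow hlt, h.ne,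
      Nat.testBit_lt_two_pow (hp.trans (Nat.pow_lt_pow_right one_lt_two h))]

theorem two_pow_add_xor (hp : p < 2 ^ n) (hq : q < 2 ^ n) :
    (2 ^ n + p) ^^^ q = 2 ^ n + (p ^^^ q) := by
  rw [two_pow_add_eq_xor hp, two_pow_add_eq_xor (xor_lt_two_pow hp hq), Nat.xor_assoc]

theorem xor_two_pow_add (hp : p < 2 ^ n) (hq : q < 2 ^ n) :
    p ^^^ (2 ^ n + q) = 2 ^ n + (p ^^^ q) := by
  rw [Nat.xor_comm, two_pow_add_xor hq hp, Nat.xor_comm]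

theorem two_pow_add_xor_two_pow_add (hp : p < 2 ^ n) (hq : q < 2 ^ n) :
    (2 ^ n + p) ^^^ (2 ^ n + q) = p ^^^ q := by
  rw [two_pow_add_eq_xor hp, two_pow_add_eq_xor hq, Nat.xor_assoc, Nat.xor_left_comm p,
    xor_xor_cancel_left]

end Nat

namespace CD

theorem add_zero : ∀ n (x : CD n), CDadd n x (CDzero n) = x
  | 0, x => by simp [CDadd, CDzero]
  | n + 1, x => by simp [CDadd, CDzero, add_zero n]

theorem zero_add : ∀ n (x : CD n), CDadd n (CDzero n) x = x
  | 0, x => by simp [CDadd, CDzero]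
  | n + 1, x => by simp [CDadd, CDzero, zero_add n]

theorem neg_zero : ∀ n, CDneg n (CDzero n) = CDzero n
  | 0 => by simp [CDneg, CDzero]
  | n + 1 => by simp [CDneg, CDzero, neg_zero n]

theorem conj_zero : ∀ n, CDconj n (CDzero n) = CDzero n
  | 0 => rfl
  | n + 1 => by simp [CDconj, CDzero, conj_zero n, neg_zero n]

theorem mul_zero_and_zero_mul (n : ℕ) :
    (∀ x : CD n, CDmul n x (CDzero n) = CDzero n) ∧
      ∀ x : CD n, CDmul n (CDzero n) x = CDzero n := by
  induction n with
  | zero => exact ⟨fun x => by simp [CDmul, CDzero], fun x => by simp [CDmul, CDzero]⟩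
  | succ n ih =>
    exact ⟨fun x => by simp [CDmul, CDzero, ih.1, ih.2, conj_zero n, neg_zero n, add_zero n],
      fun x => by simp [CDmul, CDzero, ih.1, ih.2, neg_zero n, add_zero n]⟩

theorem mul_zero (n : ℕ) (x : CD n) : CDmul n x (CDzero n) = CDzero n :=
  (mul_zero_and_zero_mul n).1 x

theorem zero_mul (n : ℕ) (x : CD n) : CDmul n (CDzero n) x = CDzero n :=
  (mul_zero_and_zero_mul n).2 x

theorem smul_zero : ∀ n (r : ℝ), CDsmul n r (CDzero n) = CDzero n
  | 0, r => by simp [CDsmul, CDzero]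
  | n + 1, r => by simp [CDsmul, CDzero, smul_zero n]

theorem smul_one : ∀ n (x : CD n), CDsmul n 1 x = x
  | 0, x => by simp [CDsmul]
  | n + 1, x => by simp [CDsmul, smul_one n]

theorem smul_smul : ∀ n (r t : ℝ) (x : CD n), CDsmul n r (CDsmul n t x) = CDsmul n (r * t) x
  | 0, r, t, x => by simp [CDsmul, mul_assoc]
  | n + 1, r, t, x => by simp [CDsmul, smul_smul n]

theorem neg_eq_neg_one_smul : ∀ n (x : CD n), CDneg n x = CDsmul n (-1) x
  | 0, x => by simp [CDneg, CDsmul]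
  | n + 1, x => by simp [CDneg, CDsmul, neg_eq_neg_one_smul n]

theorem smul_add : ∀ n (r : ℝ) (x y : CD n),
    CDadd n (CDsmul n r x) (CDsmul n r y) = CDsmul n r (CDadd n x y)
  | 0, r, x, y => by simp [CDadd, CDsmul, mul_add]
  | n + 1, r, x, y => by simp [CDadd, CDsmul, smul_add n]

theorem add_smul : ∀ n (r t : ℝ) (x : CD n),
    CDadd n (CDsmul n r x) (CDsmul n t x) = CDsmul n (r + t) x
  | 0, r, t, x => by simp [CDadd, CDsmul, _root_.add_mul]
  | n + 1, r, t, x => by simp [CDadd, CDsmul, add_smul n]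

theorem conj_smul : ∀ n (r : ℝ) (x : CD n), CDconj n (CDsmul n r x) = CDsmul n r (CDconj n x)
  | 0, r, x => rfl
  | n + 1, r, x => by
    simp [CDconj, CDsmul, conj_smul n, neg_eq_neg_one_smul n, smul_smul n, mul_comm]

theorem smul_mul_and_mul_smul (n : ℕ) :
    (∀ (r : ℝ) (x y : CD n), CDmul n (CDsmul n r x) y = CDsmul n r (CDmul n x y)) ∧
      ∀ (r : ℝ) (x y : CD n), CDmul n x (CDsmul n r y) = CDsmul n r (CDmul n x y) := by
  induction n with
  | zero =>
    exact ⟨fun r x y => by simp [CDmul, CDsmul, mul_assoc],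
      fun r x y => by simp [CDmul, CDsmul, mul_left_comm]⟩
  | succ n ih =>
    exact ⟨fun r x y => by
        simp [CDmul, CDsmul, ih.1, ih.2, ← smul_add n, neg_eq_neg_one_smul n, smul_smul n,
          mul_comm],
      fun r x y => by
        simp [CDmul, CDsmul, ih.1, ih.2, ← smul_add n, neg_eq_neg_one_smul n, smul_smul n,
          conj_smul n, mul_comm]⟩

theorem smul_mul (n : ℕ) (r : ℝ) (x y : CD n) :
    CDmul n (CDsmul n r x) y = CDsmul n r (CDmul n x y) :=
  (smul_mul_and_mul_smul n).1 r x y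

theorem mul_smul (n : ℕ) (r : ℝ) (x y : CD n) :
    CDmul n x (CDsmul n r y) = CDsmul n r (CDmul n x y) :=
  (smul_mul_and_mul_smul n).2 r x y

/-- `conjSign k` is the sign of `conj i_k`, and `unitSign n p q` the sign in
`i_p i_q = ± i_(p xor q)`: the four branches are the doubling formula applied to
`(i_p, 0)` or `(0, i_(p - 2^n))` times `(i_q, 0)` or `(0, i_(q - 2^n))`. -/
def conjSign (k : ℕ) : ℤ := if k = 0 then 1 else -1

def unitSign : ℕ → ℕ → ℕ → ℤ
  | 0, _, _ => 1
  | n + 1, p, q =>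
    if p < 2 ^ n then
      if q < 2 ^ n then unitSign n p q else unitSign n (q - 2 ^ n) p
    else
      if q < 2 ^ n then conjSign q * unitSign n (p - 2 ^ n) q
      else -(conjSign (q - 2 ^ n) * unitSign n (q - 2 ^ n) (p - 2 ^ n))


theorem unit_succ_of_lt {n k : ℕ} (hk : k < 2 ^ n) :
    CDunit (n + 1) k = (CDunit n k, CDzero n) := by
  simp [CDunit, hk]

theorem unit_succ_two_pow_add (n k : ℕ) :
    CDunit (n + 1) (2 ^ n + k) = (CDzero n, CDunit n k) := by
  simp [CDunit]

theorem conj_unit : ∀ n k, k < 2 ^ n →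
    CDconj n (CDunit n k) = CDsmul n (conjSign k) (CDunit n k)
  | 0, k, hk => by simp [CDconj, CDsmul, conjSign, show k = 0 by omega]
  | n + 1, k, hk => by
    rcases lt_or_ge k (2 ^ n) with hlt | hge
    · simp [unit_succ_of_lt hlt, CDconj, CDsmul, conj_unit n k hlt, neg_zero, smul_zero]
    · obtain ⟨k, rfl⟩ := Nat.exists_eq_add_of_le hge
      simp [unit_succ_two_pow_add, CDconj, CDsmul, conj_zero, smul_zero, conjSign,
        neg_eq_neg_one_smul]

theorem unit_mul_unit : ∀ n p q, p < 2 ^ n → q < 2 ^ n →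
    CDmul n (CDunit n p) (CDunit n q) = CDsmul n (unitSign n p q) (CDunit n (p ^^^ q))
  | 0, p, q, hp, hq => by
    obtain rfl : p = 0 := by omega
    obtain rfl : q = 0 := by omega
    simp [CDmul, CDunit, CDsmul, unitSign]
  | n + 1, p, q, hp, hq => by
    rcases lt_or_ge p (2 ^ n) with hp' | hp'
    · rcases lt_or_ge q (2 ^ n) with hq' | hq'
      · simp [unit_succ_of_lt, hp', hq', Nat.xor_lt_two_pow, CDmul, CDsmul, unitSign,
          unit_mul_unit n p q, mul_zero, zero_mul, conj_zero, neg_zero, add_zero, smul_zero]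
      · obtain ⟨q, rfl⟩ := Nat.exists_eq_add_of_le hq'
        have hq'' : q < 2 ^ n := by omega
        have hqp := unit_mul_unit n q p hq'' hp'
        rw [Nat.xor_comm] at hqp
        simp [unit_succ_of_lt, unit_succ_two_pow_add, Nat.xor_two_pow_add hp' hq'', hp', CDmul,
          CDsmul, unitSign, hqp, mul_zero, conj_zero, neg_zero, add_zero, smul_zero]
    · obtain ⟨p, rfl⟩ := Nat.exists_eq_add_of_le hp'
      have hp'' : p < 2 ^ n := by omega
      rcases lt_or_ge q (2 ^ n) with hq' | hq'
      · simp [unit_succ_of_lt, unit_succ_two_pow_add, Nat.two_pow_add_xor hp'' hq', hq', CDmul,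
          CDsmul, unitSign, unit_mul_unit n p q hp'' hq', conj_unit n q hq', mul_smul, smul_smul,
          mul_zero, zero_mul, conj_zero, neg_zero, add_zero, zero_add, smul_zero]
      · obtain ⟨q, rfl⟩ := Nat.exists_eq_add_of_le hq'
        have hq'' : q < 2 ^ n := by omega
        have hqp := unit_mul_unit n q p hq'' hp''
        rw [Nat.xor_comm] at hqp
        simp [unit_succ_two_pow_add, Nat.two_pow_add_xor_two_pow_add hp'' hq'',
          Nat.xor_lt_two_pow hp'' hq'', unit_succ_of_lt, CDmul, CDsmul, unitSign, hqp,
          conj_unit n q hq'', smul_mul, smul_smul, neg_eq_neg_one_smul, mul_zero, conj_zero,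
          add_zero, zero_add, smul_zero]

theorem smul_unit_eq_zero_iff : ∀ n (r : ℝ) k, k < 2 ^ n →
    (CDsmul n r (CDunit n k) = CDzero n ↔ r = 0)
  | 0, r, k, _ => by simp [CDsmul, CDunit, CDzero]
  | n + 1, r, k, hk => by
    rcases lt_or_ge k (2 ^ n) with hlt | hge
    · simp [unit_succ_of_lt hlt, CDsmul, CDzero, smul_zero, smul_unit_eq_zero_iff n r k hlt]
    · obtain ⟨k, rfl⟩ := Nat.exists_eq_add_of_le hge
      simp [unit_succ_two_pow_add, CDsmul, CDzero, smul_zero,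
        smul_unit_eq_zero_iff n r k (by omega)]

theorem unit_ne_zero {n k : ℕ} (hk : k < 2 ^ n) : CDunit n k ≠ CDzero n := by
  simpa [smul_one] using (smul_unit_eq_zero_iff n 1 k hk).not

theorem smul_unit_eq_unit_iff : ∀ n (r : ℝ) j k, j < 2 ^ n → k < 2 ^ n →
    (CDsmul n r (CDunit n j) = CDunit n k ↔ r = 1 ∧ j = k)
  | 0, r, j, k, hj, hk => by simp [CDsmul, CDunit]; omega
  | n + 1, r, j, k, hj, hk => by
    rcases lt_or_ge j (2 ^ n) with hj' | hj'
    · rcases lt_or_ge k (2 ^ n) with hk' | hk'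
      · simp [unit_succ_of_lt, hj', hk', CDsmul, smul_zero, smul_unit_eq_unit_iff n r j k hj' hk']
      · obtain ⟨k, rfl⟩ := Nat.exists_eq_add_of_le hk'
        simp [unit_succ_of_lt hj', unit_succ_two_pow_add, CDsmul, smul_zero,
          (unit_ne_zero (by omega : k < 2 ^ n)).symm]
        omega
    · obtain ⟨j, rfl⟩ := Nat.exists_eq_add_of_le hj'
      rcases lt_or_ge k (2 ^ n) with hk' | hk'
      · simp [unit_succ_of_lt hk', unit_succ_two_pow_add, CDsmul, smul_zero,
          (unit_ne_zero hk').symm]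
        omega
      · obtain ⟨k, rfl⟩ := Nat.exists_eq_add_of_le hk'
        simp [unit_succ_two_pow_add, CDsmul, smul_zero,
          smul_unit_eq_unit_iff n r j k (by omega) (by omega)]

theorem unit_mul_unit_eq_unit_iff {n p q r : ℕ} (hp : p < 2 ^ n) (hq : q < 2 ^ n)
    (hr : r < 2 ^ n) :
    CDmul n (CDunit n p) (CDunit n q) = CDunit n r ↔ unitSign n p q = 1 ∧ p ^^^ q = r := by
  rw [unit_mul_unit n p q hp hq, smul_unit_eq_unit_iff n _ _ r (Nat.xor_lt_two_pow hp hq) hr,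
    Int.cast_eq_one]

/-- `i_p + i_(2^n + (p xor S))`; for `n = 4`, `S = 8 + s` and `p = a < 8` this is the
Pathion element `i_a + i_(16 + 8 + f)` of the theorem. -/
def assessor (n S p : ℕ) : CD (n + 1) :=
  CDadd (n + 1) (CDunit (n + 1) p) (CDunit (n + 1) (2 ^ n + (p ^^^ S)))

def assessorProductCoeffs (n S p q : ℕ) : ℤ × ℤ :=
  (unitSign n p q - conjSign (q ^^^ S) * unitSign n (q ^^^ S) (p ^^^ S),
    unitSign n (q ^^^ S) p + conjSign q * unitSign n (p ^^^ S) q)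

theorem assessor_mul_assessor {n S p q : ℕ} (hS : S < 2 ^ n) (hp : p < 2 ^ n) (hq : q < 2 ^ n) :
    CDmul (n + 1) (assessor n S p) (assessor n S q) =
      (CDsmul n (assessorProductCoeffs n S p q).1 (CDunit n (p ^^^ q)),
        CDsmul n (assessorProductCoeffs n S p q).2 (CDunit n (p ^^^ q ^^^ S))) := by
  have hpS := Nat.xor_lt_two_pow hp hS
  have hqS := Nat.xor_lt_two_pow hq hS
  have hlow : q ^^^ S ^^^ (p ^^^ S) = p ^^^ q := by
    rw [Nat.xor_comm p, Nat.xor_assoc, Nat.xor_xor_cancel_left, Nat.xor_comm]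
  have hhigh₁ : q ^^^ S ^^^ p = p ^^^ q ^^^ S := by
    rw [Nat.xor_right_comm, Nat.xor_comm q]
  have hhigh₂ : p ^^^ S ^^^ q = p ^^^ q ^^^ S := Nat.xor_right_comm _ _ _
  simp only [assessor, unit_succ_of_lt hp, unit_succ_of_lt hq, unit_succ_two_pow_add, CDadd,
    add_zero, zero_add, CDmul, conj_unit n q hq, conj_unit n _ hqS, smul_mul, mul_smul,
    unit_mul_unit n _ _ hp hq, unit_mul_unit n _ _ hqS hpS, unit_mul_unit n _ _ hqS hp,
    unit_mul_unit n _ _ hpS hq, hlow, hhigh₁, hhigh₂, smul_smul, neg_eq_neg_one_smul, add_smul,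
    assessorProductCoeffs]
  push_cast
  ring_nf

theorem assessor_mul_assessor_eq_zero_iff {n S p q : ℕ} (hS : S < 2 ^ n) (hp : p < 2 ^ n)
    (hq : q < 2 ^ n) :
    CDmul (n + 1) (assessor n S p) (assessor n S q) = CDzero (n + 1) ↔
      assessorProductCoeffs n S p q = 0 := by
  rw [assessor_mul_assessor hS hp hq, CDzero, Prod.mk.injEq,
    smul_unit_eq_zero_iff n _ _ (Nat.xor_lt_two_pow hp hq),
    smul_unit_eq_zero_iff n _ _ (Nat.xor_lt_two_pow (Nat.xor_lt_two_pow hp hq) hS),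
    Int.cast_eq_zero, Int.cast_eq_zero, Prod.ext_iff, Prod.fst_zero, Prod.snd_zero]

/- The one place where the specific sign table of the sedenions enters: a check of all
`8 ^ 3` choices of `(s, a, b)`. -/
set_option synthInstance.maxSize 256 in
theorem assessorProductCoeffs_sedenion_ne_zero :
    ∀ s : ℕ, s < 8 → ∀ a : ℕ, a < 8 → ∀ b : ℕ, b < 8 →
      a ≠ s ∧ unitSign 4 a b = 1 ∧ unitSign 4 a (b ^^^ (8 + s)) = 1 →
      assessorProductCoeffs 4 (8 + s) a b ≠ 0 := by
  decide

end CD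

theorem pathion_poisoned_zigzag_general (s a b c : ℕ) (hs : s < 8)
    (ha : a < 8) (hb : b < 8) (hc : c < 8)
    (has : a ≠ s)
    (hzigL : IsCPO 4 a b c)
    (hzigU : IsCPO 4 a (8 + (b ^^^ s)) (8 + (c ^^^ s))) :
    CDmul 5 (CDadd 5 (CDunit 5 a) (CDunit 5 (16 + 8 + (a ^^^ s))))
      (CDadd 5 (CDunit 5 b) (CDunit 5 (16 + 8 + (b ^^^ s)))) ≠ CDzero 5 := by
  have hxor : ∀ x < 8, 8 + (x ^^^ s) = x ^^^ (8 + s) := fun x hx =>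
    (Nat.xor_two_pow_add (n := 3) hx hs).symm
  have hab : CD.unitSign 4 a b = 1 :=
    ((CD.unit_mul_unit_eq_unit_iff (by omega) (by omega) (by omega)).1 hzigL.1).1
  have haU : CD.unitSign 4 a (b ^^^ (8 + s)) = 1 := by
    rw [← hxor b hb]
    have hbs8 := Nat.xor_lt_two_pow (n := 3) hb hs
    have hcs8 := Nat.xor_lt_two_pow (n := 3) hc hs
    exact ((CD.unit_mul_unit_eq_unit_iff (by omega) (by omega) (by omega)).1 hzigU.1).1
  rw [Nat.add_assoc, Nat.add_assoc, hxor a ha, hxor b hb]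
  exact (CD.assessor_mul_assessor_eq_zero_iff (n := 4) (by omega) (by omega) (by omega)).not.2
    (CD.assessorProductCoeffs_sedenion_ne_zero s hs a ha b hb ⟨has, hab, haU⟩)

/-- In the 32-D Pathions with strut constant `S = 8 + s` (`0 < s < 8`), if
`(a, b, c)` is the zigzag L-trip of the Sedenion box-kite with strut constant
`s` (a CPO trip of indices `< 8`, none equal to `s`, whose associated U-trip
`(a, 8 + (b XOR s), 8 + (c XOR s))` is also CPO), and `e = b XOR s`,
`f = a XOR s`, then `(i_a + i_{16+8+f})(i_b + i_{16+8+e}) ≠ 0`: the candidate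
assessors do not mutually zero-divide. -/
theorem pathion_poisoned_zigzag (s a b c : ℕ) (hs0 : 0 < s) (hs : s < 8)
    (ha0 : 0 < a) (hb0 : 0 < b) (hc0 : 0 < c)
    (ha : a < 8) (hb : b < 8) (hc : c < 8)
    (has : a ≠ s) (hbs : b ≠ s) (hcs : c ≠ s)
    (hzigL : IsCPO 4 a b c)
    (hzigU : IsCPO 4 a (8 + (b ^^^ s)) (8 + (c ^^^ s))) :
    CDmul 5 (CDadd 5 (CDunit 5 a) (CDunit 5 (16 + 8 + (a ^^^ s))))
      (CDadd 5 (CDunit 5 b) (CDunit 5 (16 + 8 + (b ^^^ s)))) ≠ CDzero 5 :=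
  pathion_poisoned_zigzag_general s a b c hs ha hb hc has hzigL hzigU
end
end
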